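/- Suppose Λ̂_1, Λ̂_2, Λ_1, Λ_2 are nondecreasing absolutely continuous on [0, t*] with corresponding survival functions Ŝ, S bounded below by η > 0, and cumulative incidences F̂_j, F_j. Then there exist constants C_1, C_2 > 0 (depending only on η and t*) such that |F̂_j(t*) - F_j(t*)| ≤ C_1 · sup_{s ≤ t*}|Λ̂_1(s) - Λ_1(s)| + C_2 · sup_{s ≤ t*}|Λ̂_2(s) - Λ_2(s)|. -/

import Mathlib

/-!
Write `F̂_j - F_j = ∫ (Ŝ - S) dΛ̂_j + ∫ S d(Λ̂_j - Λ_j)`. Since `x ↦ exp (-x)` is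
`1`-Lipschitz on `[0, ∞)`, the first term is at most
`(sup |Λ̂₁ - Λ₁| + sup |Λ̂₂ - Λ₂|) · Λ̂_j(t*)`, and `Λ̂_j(t*) ≤ log (1 / η)` because
`Ŝ(t*) ≥ η`. The survival function `S` is absolutely continuous and nonincreasing with
`S 0 = 1`, so the second mean value theorem bounds the second term by `sup |Λ̂_j - Λ_j|`.
Hence `C₁ = C₂ = |log η| + 1` works.
-/

open MeasureTheory intervalIntegral Set

theorem LipschitzOnWith.comp_absolutelyContinuousOnInterval {g f : ℝ → ℝ} {K : NNReal}
    {s : Set ℝ} {a b : ℝ} (hg : LipschitzOnWith K g s) (hf : AbsolutelyContinuousOnInterval f a b)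
    (hfs : MapsTo f (uIcc a b) s) : AbsolutelyContinuousOnInterval (g ∘ f) a b := by
  refine squeeze_zero' (Filter.Eventually.of_forall fun _ ↦
    Finset.sum_nonneg fun _ _ ↦ dist_nonneg) ?_
    (by simpa using Filter.Tendsto.const_mul (K : ℝ) hf)
  filter_upwards [Filter.mem_inf_of_right (Filter.mem_principal_self _)] with E hE
  rw [Finset.mul_sum]
  gcongr with i hi
  exact hg.dist_le_mul _ (hfs (hE.1 i hi).1) _ (hfs (hE.1 i hi).2)

theorem Real.lipschitzOnWith_exp_neg : LipschitzOnWith 1 (fun x ↦ Real.exp (-x)) (Ici 0) := by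
  refine (convex_Ici 0).lipschitzOnWith_of_nnnorm_hasDerivWithin_le
    (fun x _ ↦ ((Real.hasDerivAt_exp (-x)).comp x (hasDerivAt_neg x)).hasDerivWithinAt)
    fun x hx ↦ ?_
  rw [← NNReal.coe_le_coe, coe_nnnorm]
  simpa using hx

theorem AntitoneOn.ae_deriv_nonpos {S : ℝ → ℝ} {a b : ℝ} (hS : AntitoneOn S (Icc a b)) :
    ∀ᵐ x, x ∈ Ioc a b → deriv S x ≤ 0 := by
  filter_upwards [volume.ae_ne b] with x hxb hx
  rw [← derivWithin_of_mem_nhds (Icc_mem_nhds hx.1 (lt_of_le_of_ne hx.2 hxb))]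
  exact hS.derivWithin_nonpos

/-- Bound form of the second mean value theorem, proved by integrating by parts against the
primitive of `g`. -/
theorem abs_integral_mul_le_of_antitoneOn {S g : ℝ → ℝ} {a b D : ℝ} (hab : a ≤ b)
    (hS : AbsolutelyContinuousOnInterval S a b) (hS_anti : AntitoneOn S (Icc a b))
    (hSb : 0 ≤ S b) (hg : IntervalIntegrable g volume a b)
    (hG : ∀ x ∈ Icc a b, |∫ u in a..x, g u| ≤ D) :
    |∫ x in a..b, S x * g x| ≤ S a * D := by
  set G : ℝ → ℝ := fun x ↦ ∫ u in a..x, g u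
  have hderiv_G : ∫ x in a..b, S x * deriv G x = ∫ x in a..b, S x * g x := by
    refine integral_congr_ae ?_
    filter_upwards [hg.ae_hasDerivAt_integral] with x hx hxab
    rw [(hx (uIoc_subset_uIcc hxab) a left_mem_uIcc).deriv]
  have hparts : ∫ x in a..b, S x * deriv G x
      = S b * G b - S a * G a - ∫ x in a..b, deriv S x * G x :=
    hS.integral_mul_deriv_eq_deriv_mul
      (hg.absolutelyContinuousOnInterval_intervalIntegral left_mem_uIcc)
  have hG_b : |S b * G b| ≤ S b * D := by
    rw [abs_mul, abs_of_nonneg hSb]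
    exact mul_le_mul_of_nonneg_left (hG b ⟨hab, le_rfl⟩) hSb
  have hrest : |∫ x in a..b, deriv S x * G x| ≤ (S a - S b) * D := by
    rw [← Real.norm_eq_abs]
    calc ‖∫ x in a..b, deriv S x * G x‖ ≤ ∫ x in a..b, -deriv S x * D := by
          refine norm_integral_le_of_norm_le hab ?_ (hS.intervalIntegrable_deriv.neg.mul_const D)
          filter_upwards [hS_anti.ae_deriv_nonpos] with x hx hxab
          rw [Real.norm_eq_abs, abs_mul, abs_of_nonpos (hx hxab)]
          exact mul_le_mul_of_nonneg_left (hG x (Ioc_subset_Icc_self hxab))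
            (neg_nonneg.2 (hx hxab))
      _ = (S a - S b) * D := by
          rw [intervalIntegral.integral_mul_const, intervalIntegral.integral_neg,
            hS.integral_deriv_eq_sub]
          ring
  rw [← hderiv_G, hparts, show G a = 0 from integral_same, mul_zero, sub_zero]
  calc |S b * G b - ∫ x in a..b, deriv S x * G x|
      ≤ |S b * G b| + |∫ x in a..b, deriv S x * G x| := abs_sub _ _
    _ ≤ S a * D := by linarith

theorem abs_integral_mul_le_of_abs_le {f w : ℝ → ℝ} {a b M : ℝ} (hab : a ≤ b)
    (hw : ∀ u ∈ Icc a b, 0 ≤ w u) (hw_int : IntervalIntegrable w volume a b)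
    (hf : ∀ u ∈ Icc a b, |f u| ≤ M) :
    |∫ u in a..b, f u * w u| ≤ M * ∫ u in a..b, w u := by
  rw [← Real.norm_eq_abs, ← intervalIntegral.integral_const_mul]
  refine norm_integral_le_of_norm_le hab (Filter.Eventually.of_forall fun u hu ↦ ?_)
    (hw_int.const_mul M)
  have hu := Ioc_subset_Icc_self hu
  rw [Real.norm_eq_abs, abs_mul, abs_of_nonneg (hw u hu)]
  exact mul_le_mul_of_nonneg_right (hf u hu) (hw u hu)

theorem abs_le_iSup_Icc {f : ℝ → ℝ} {a b x : ℝ} (hf : ContinuousOn f (Icc a b))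
    (hx : x ∈ Icc a b) : |f x| ≤ ⨆ s : Icc a b, |f s| :=
  le_ciSup (isCompact_range (continuous_abs.comp hf.domRestrict)).bddAbove ⟨x, hx⟩

theorem Fin.apply_le_apply_zero_add_apply_one {f : Fin 2 → ℝ} (hf : ∀ i, 0 ≤ f i) (j : Fin 2) :
    f j ≤ f 0 + f 1 :=
  Fin.sum_univ_two f ▸ Finset.single_le_sum (fun i _ ↦ hf i) (Finset.mem_univ j)

structure IsCumulativeHazard (ℓ Λ : ℝ → ℝ) : Prop where
  nonneg : ∀ u, 0 ≤ ℓ u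
  intervalIntegrable : ∀ s, IntervalIntegrable ℓ volume 0 s
  eq_integral : ∀ s, Λ s = ∫ u in (0:ℝ)..s, ℓ u

namespace IsCumulativeHazard

variable {ℓ Λ ℓ' Λ' : ℝ → ℝ}

theorem add (h : IsCumulativeHazard ℓ Λ) (h' : IsCumulativeHazard ℓ' Λ') :
    IsCumulativeHazard (fun u ↦ ℓ u + ℓ' u) (fun s ↦ Λ s + Λ' s) where
  nonneg u := add_nonneg (h.nonneg u) (h'.nonneg u)
  intervalIntegrable s := (h.intervalIntegrable s).add (h'.intervalIntegrable s)
  eq_integral s := by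
    rw [h.eq_integral, h'.eq_integral,
      integral_add (h.intervalIntegrable s) (h'.intervalIntegrable s)]

theorem zero (h : IsCumulativeHazard ℓ Λ) : Λ 0 = 0 := by rw [h.eq_integral, integral_same]

theorem monotone (h : IsCumulativeHazard ℓ Λ) : Monotone Λ := fun x y hxy ↦ by
  have hxy' := integral_interval_sub_left (h.intervalIntegrable y) (h.intervalIntegrable x)
  rw [← h.eq_integral, ← h.eq_integral] at hxy'
  linarith [integral_nonneg (μ := volume) hxy fun u _ ↦ h.nonneg u]

theorem apply_nonneg (h : IsCumulativeHazard ℓ Λ) {s : ℝ} (hs : 0 ≤ s) : 0 ≤ Λ s :=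
  h.zero ▸ h.monotone hs

theorem continuous (h : IsCumulativeHazard ℓ Λ) : Continuous Λ := by
  rw [funext h.eq_integral]
  exact continuous_primitive (fun a b ↦ (h.intervalIntegrable a).symm.trans
    (h.intervalIntegrable b)) 0

theorem absolutelyContinuousOnInterval (h : IsCumulativeHazard ℓ Λ) (t : ℝ) :
    AbsolutelyContinuousOnInterval Λ 0 t := by
  rw [funext h.eq_integral]
  exact (h.intervalIntegrable t).absolutelyContinuousOnInterval_intervalIntegral left_mem_uIcc

theorem absolutelyContinuousOnInterval_exp_neg (h : IsCumulativeHazard ℓ Λ) {t : ℝ}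
    (ht : 0 ≤ t) : AbsolutelyContinuousOnInterval (fun s ↦ Real.exp (-Λ s)) 0 t :=
  Real.lipschitzOnWith_exp_neg.comp_absolutelyContinuousOnInterval
    (h.absolutelyContinuousOnInterval t) fun _ hs ↦
      h.apply_nonneg (uIcc_of_le ht ▸ hs).1

theorem antitone_exp_neg (h : IsCumulativeHazard ℓ Λ) : Antitone fun s ↦ Real.exp (-Λ s) :=
  fun _ _ hxy ↦ Real.exp_le_exp.2 (neg_le_neg (h.monotone hxy))

end IsCumulativeHazard

theorem abs_integral_exp_neg_mul_sub_le {ℓ ℓ' Λ Λ' τ τ' T T' : ℝ → ℝ} {t M D : ℝ} (ht : 0 ≤ t)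
    (h : IsCumulativeHazard ℓ Λ) (h' : IsCumulativeHazard ℓ' Λ')
    (hT : IsCumulativeHazard τ T) (hT' : IsCumulativeHazard τ' T')
    (hM : ∀ s ∈ Icc 0 t, |T s - T' s| ≤ M) (hD : ∀ s ∈ Icc 0 t, |Λ s - Λ' s| ≤ D) :
    |(∫ u in (0:ℝ)..t, Real.exp (-T u) * ℓ u) - ∫ u in (0:ℝ)..t, Real.exp (-T' u) * ℓ' u|
      ≤ M * Λ t + D := by
  set S := fun u ↦ Real.exp (-T u)
  set S' := fun u ↦ Real.exp (-T' u)
  have hS : Continuous S := Real.continuous_exp.comp hT.continuous.neg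
  have hS' : Continuous S' := Real.continuous_exp.comp hT'.continuous.neg
  have hsplit : (∫ u in (0:ℝ)..t, S u * ℓ u) - ∫ u in (0:ℝ)..t, S' u * ℓ' u
      = (∫ u in (0:ℝ)..t, (S u - S' u) * ℓ u) + ∫ u in (0:ℝ)..t, S' u * (ℓ u - ℓ' u) := by
    have hℓ := h.intervalIntegrable t
    have hℓ' := h'.intervalIntegrable t
    have hdiff : IntervalIntegrable (fun u ↦ (S u - S' u) * ℓ u) volume 0 t :=
      hℓ.continuousOn_mul (hS.sub hS').continuousOn
    rw [← integral_sub (hℓ.continuousOn_mul hS.continuousOn)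
        (hℓ'.continuousOn_mul hS'.continuousOn),
      ← integral_add hdiff ((hℓ.sub hℓ').continuousOn_mul hS'.continuousOn)]
    congr 1 with u
    ring
  have hsurvival : |∫ u in (0:ℝ)..t, (S u - S' u) * ℓ u| ≤ M * Λ t := by
    rw [h.eq_integral]
    refine abs_integral_mul_le_of_abs_le ht (fun u _ ↦ h.nonneg u) (h.intervalIntegrable t)
      fun u hu ↦ ?_
    calc |S u - S' u| ≤ |T u - T' u| := by
          simpa [Real.dist_eq] using Real.lipschitzOnWith_exp_neg.dist_le_mul _
            (hT.apply_nonneg hu.1) _ (hT'.apply_nonneg hu.1)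
      _ ≤ M := hM u hu
  have hhazard : |∫ u in (0:ℝ)..t, S' u * (ℓ u - ℓ' u)| ≤ D := by
    have := abs_integral_mul_le_of_antitoneOn (D := D) ht
      (hT'.absolutelyContinuousOnInterval_exp_neg ht) (hT'.antitone_exp_neg.antitoneOn _)
      (Real.exp_pos _).le
      ((h.intervalIntegrable t).sub (h'.intervalIntegrable t)) fun x hx ↦ by
        rw [integral_sub (h.intervalIntegrable x) (h'.intervalIntegrable x), ← h.eq_integral,
          ← h'.eq_integral]
        exact hD x hx
    simpa [hT'.zero] using this
  rw [hsplit]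
  exact (abs_add_le _ _).trans (add_le_add hsurvival hhazard)

/-- there exist constants `C₁, C₂ > 0`, depending only on `η` and `t*`,
such that for any pair of competing-risks hazard systems (nondecreasing absolutely
continuous cumulative hazards given by densities, with survival functions bounded
below by `η` on `[0,t*]`), the cumulative incidences satisfy
`|F̂_j(t*) - F_j(t*)| ≤ C₁·sup_{s≤t*}|Λ̂₁ - Λ₁| + C₂·sup_{s≤t*}|Λ̂₂ - Λ₂|`. -/
theorem stmt9 (η tstar : ℝ) (hη : 0 < η) (ht : 0 < tstar) :
    ∃ C1 C2 : ℝ, 0 < C1 ∧ 0 < C2 ∧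
      ∀ (lamhat lam : Fin 2 → ℝ → ℝ) (Lamhat Lam : Fin 2 → ℝ → ℝ)
        (Shat S : ℝ → ℝ) (Fhat F : Fin 2 → ℝ → ℝ) (j : Fin 2),
        (∀ i u, 0 ≤ lamhat i u) → (∀ i u, 0 ≤ lam i u) →
        (∀ i s, IntervalIntegrable (lamhat i) volume 0 s) →
        (∀ i s, IntervalIntegrable (lam i) volume 0 s) →
        (∀ i s, Lamhat i s = ∫ u in (0:ℝ)..s, lamhat i u) →
        (∀ i s, Lam i s = ∫ u in (0:ℝ)..s, lam i u) →
        (∀ s, Shat s = Real.exp (-(Lamhat 0 s + Lamhat 1 s))) →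
        (∀ s, S s = Real.exp (-(Lam 0 s + Lam 1 s))) →
        (∀ s ∈ Icc 0 tstar, η ≤ Shat s) →
        (∀ s ∈ Icc 0 tstar, η ≤ S s) →
        (∀ i s, Fhat i s = ∫ u in (0:ℝ)..s, Shat u * lamhat i u) →
        (∀ i s, F i s = ∫ u in (0:ℝ)..s, S u * lam i u) →
        |Fhat j tstar - F j tstar|
          ≤ C1 * (⨆ s : Icc 0 tstar, |Lamhat 0 (s:ℝ) - Lam 0 (s:ℝ)|)
            + C2 * (⨆ s : Icc 0 tstar, |Lamhat 1 (s:ℝ) - Lam 1 (s:ℝ)|) := by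
  refine ⟨|Real.log η| + 1, |Real.log η| + 1, by positivity, by positivity, ?_⟩
  intro lamhat lam Lamhat Lam Shat S Fhat F j hlamhat hlam hlamhat_int hlam_int hLamhat hLam
    hShat hS hShat_ge _ hFhat hF
  have hhat i : IsCumulativeHazard (lamhat i) (Lamhat i) := ⟨hlamhat i, hlamhat_int i, hLamhat i⟩
  have hcum i : IsCumulativeHazard (lam i) (Lam i) := ⟨hlam i, hlam_int i, hLam i⟩
  set D : Fin 2 → ℝ := fun i ↦ ⨆ s : Icc 0 tstar, |Lamhat i s - Lam i s|
  have hD i : ∀ s ∈ Icc 0 tstar, |Lamhat i s - Lam i s| ≤ D i := fun s hs ↦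
    abs_le_iSup_Icc (f := fun s ↦ Lamhat i s - Lam i s)
      ((hhat i).continuous.sub (hcum i).continuous).continuousOn hs
  have hD_nonneg i : 0 ≤ D i := (abs_nonneg _).trans (hD i 0 ⟨le_rfl, ht.le⟩)
  have htotal s (hs : s ∈ Icc 0 tstar) :
      |(Lamhat 0 s + Lamhat 1 s) - (Lam 0 s + Lam 1 s)| ≤ D 0 + D 1 :=
    calc _ = |(Lamhat 0 s - Lam 0 s) + (Lamhat 1 s - Lam 1 s)| := by ring_nf
      _ ≤ D 0 + D 1 := (abs_add_le _ _).trans (add_le_add (hD 0 s hs) (hD 1 s hs))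
  have hLamhat_le : Lamhat j tstar ≤ |Real.log η| := by
    have hsum : Lamhat 0 tstar + Lamhat 1 tstar ≤ -Real.log η := by
      have := (Real.log_le_iff_le_exp hη).2 (hShat tstar ▸ hShat_ge tstar ⟨ht.le, le_rfl⟩)
      linarith
    linarith [neg_le_abs (Real.log η), Fin.apply_le_apply_zero_add_apply_one
      (f := fun i ↦ Lamhat i tstar) (fun i ↦ (hhat i).apply_nonneg ht.le) j]
  have key := abs_integral_exp_neg_mul_sub_le ht.le (hhat j) (hcum j) ((hhat 0).add (hhat 1))
    ((hcum 0).add (hcum 1)) htotal (hD j)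
  simp only [hFhat, hF, hShat, hS]
  refine key.trans ?_
  linarith [mul_le_mul_of_nonneg_left hLamhat_le (add_nonneg (hD_nonneg 0) (hD_nonneg 1)),
    Fin.apply_le_apply_zero_add_apply_one hD_nonneg j]
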